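/- Let f be a positive continuous function on [0, ∞), let c₁, c₂ > 0 and k > 1 be real numbers such that f(t) ≤ c₁ + c₂ f(t)^k for all t ≥ 0. If c₁^{k−1} c₂ < (k−1)^{k−1}/k^k and f(0) ≤ c₁, then f is uniformly bounded on [0, ∞); in fact f(t) < k c₁/(k−1) for all t ≥ 0. (Lemma 5.2.) -/
import Mathlib

/-- Key algebraic fact: at the barrier `M = k c₁/(k-1)` the inequality fails strictly. -/
lemma gz_key (c₁ c₂ k : ℝ) (hc₁ : 0 < c₁) (hc₂ : 0 < c₂) (hk : 1 < k)
    (hsmall : c₁ ^ (k - 1) * c₂ < (k - 1) ^ (k - 1) / k ^ k) :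
    c₁ + c₂ * (k * c₁ / (k - 1)) ^ k < k * c₁ / (k - 1) := by
  have hk1 : (0:ℝ) < k - 1 := by linarith
  have hk0 : (0:ℝ) < k := by linarith
  have hkk : (0:ℝ) < k ^ k := Real.rpow_pos_of_pos hk0 k
  have hbk : (0:ℝ) < (k - 1) ^ k := Real.rpow_pos_of_pos hk1 k
  have hak : (0:ℝ) < c₁ ^ k := Real.rpow_pos_of_pos hc₁ k
  have hA : c₁ ^ (k - 1) = c₁ ^ k / c₁ := Real.rpow_sub_one hc₁.ne' k
  have hB : (k - 1) ^ (k - 1) = (k - 1) ^ k / (k - 1) := Real.rpow_sub_one hk1.ne' k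
  have hM : (k * c₁ / (k - 1)) ^ k = k ^ k * c₁ ^ k / (k - 1) ^ k := by
    rw [Real.div_rpow (by positivity) hk1.le, Real.mul_rpow hk0.le hc₁.le]
  rw [hM]
  rw [hA, hB] at hsmall
  have h3 : c₂ * (k ^ k * c₁ ^ k / (k - 1) ^ k) < c₁ / (k - 1) := by
    rw [mul_div_assoc', div_lt_div_iff₀ hbk hk1]
    rw [div_div, div_mul_eq_mul_div, div_lt_div_iff₀ hc₁ (by positivity)] at hsmall
    nlinarith [mul_lt_mul_of_pos_right hsmall (mul_pos hc₁ hk1), hbk, hak]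
  have h4 : c₁ + c₁ / (k - 1) = k * c₁ / (k - 1) := by field_simp; ring
  linarith

/-- **Lemma 5.2.** If `f` is positive and continuous on `[0,∞)`, `f ≤ c₁ + c₂ f^k` with
`c₁, c₂ > 0`, `k > 1`, `c₁^{k-1} c₂ < (k-1)^{k-1}/k^k` and `f(0) ≤ c₁`, then `f` is
uniformly bounded; in fact `f(t) < k c₁/(k-1)` for all `t ≥ 0`. -/
theorem gz_lemma5_2 (f : ℝ → ℝ) (hcont : ContinuousOn f (Set.Ici 0))
    (hpos : ∀ t ∈ Set.Ici (0 : ℝ), 0 < f t)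
    (c₁ c₂ k : ℝ) (hc₁ : 0 < c₁) (hc₂ : 0 < c₂) (hk : 1 < k)
    (hineq : ∀ t ∈ Set.Ici (0 : ℝ), f t ≤ c₁ + c₂ * f t ^ k)
    (hsmall : c₁ ^ (k - 1) * c₂ < (k - 1) ^ (k - 1) / k ^ k)
    (hf0 : f 0 ≤ c₁) :
    ∀ t ∈ Set.Ici (0 : ℝ), f t < k * c₁ / (k - 1) := by
  have hk1 : (0:ℝ) < k - 1 := by linarith
  set M := k * c₁ / (k - 1) with hMdef
  have hkey := gz_key c₁ c₂ k hc₁ hc₂ hk hsmall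
  have hc₁M : c₁ < M := by
    rw [hMdef, lt_div_iff₀ hk1]; nlinarith
  intro t ht
  by_contra hcon
  push_neg at hcon
  have hMmem : M ∈ Set.Icc (f 0) (f t) := ⟨le_trans hf0 hc₁M.le, hcon⟩
  have hsub : Set.Icc (0:ℝ) t ⊆ Set.Ici 0 := Set.Icc_subset_Ici_self
  have := intermediate_value_Icc (Set.mem_Ici.mp ht) (hcont.mono hsub)
  obtain ⟨s, hs, hfs⟩ := this hMmem
  have := hineq s (hsub hs)
  rw [hfs] at this
  linarith
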